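/- Let S be a commutative bipotent semiring and m < n natural numbers. If M_n(S) is strongly permutable then M_m(S) is strongly permutable, and if UT_n(S) is strongly permutable then UT_m(S) is strongly permutable. -/

import Mathlib

set_option maxHeartbeats 1000000

universe u

/-! ### Semiring classes.

A *semiring* here is a nonempty set with an associative commutative addition and an
associative multiplication which distributes over addition on both sides; no zero or
identity element is assumed. -/

class PlainSemiring (S : Type u) extends Add S, Mul S where
  nonempty' : Nonempty S
  add_assoc' : ∀ a b c : S, a + b + c = a + (b + c)
  add_comm' : ∀ a b : S, a + b = b + a
  mul_assoc' : ∀ a b c : S, a * b * c = a * (b * c)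
  left_distrib' : ∀ a b c : S, a * (b + c) = a * b + a * c
  right_distrib' : ∀ a b c : S, (a + b) * c = a * c + b * c

/-- A bipotent semiring: `x + y` is always either `x` or `y`.
(The induced total order is given by `x ≤ y ↔ x + y = y`.) -/
class BipotentSemiring (S : Type u) extends PlainSemiring S where
  bipotent : ∀ a b : S, a + b = a ∨ a + b = b

/-- A commutative bipotent semiring. -/
class CommBipotentSemiring (S : Type u) extends BipotentSemiring S where
  mul_comm' : ∀ a b : S, a * b = b * a

/-- `mpow a n` is the `(n+1)`-st power of `a`, so the set of positive powers of `a`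
is exactly `Set.range (mpow a)`, and the multiplicative order of `a` is the
cardinality of `Set.range (mpow a)`. -/
def mpow {S : Type*} [Mul S] (a : S) : ℕ → S
  | 0 => a
  | n + 1 => mpow a n * a

lemma mpow_mul_mpow {S : Type*} [PlainSemiring S] (a : S) (m n : ℕ) :
    mpow a m * mpow a n = mpow a (m + n + 1) := by
  induction n with
  | zero => rfl
  | succ n ih =>
    show mpow a m * (mpow a n * a) = mpow a (m + n + 1) * a
    rw [← PlainSemiring.mul_assoc', ih]

/-! ### Products of finite families, and permutability. -/

/-- Fold step used to define sums/products of possibly empty families in a structure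
with no neutral element; the overall fold is `none` iff the family is empty. -/
def optStep {S : Type*} (op : S → S → S) : Option S → S → Option S :=
  fun acc x => some (acc.elim x (fun a => op a x))

/-- The sum `s 0 + s 1 + ⋯` of a finite family, as an `Option` (`none` iff `k = 0`). -/
def finSum {S : Type*} [Add S] {k : ℕ} (s : Fin k → S) : Option S :=
  (List.ofFn s).foldl (optStep (· + ·)) none

/-- The product `s 0 * s 1 * ⋯` of a finite family, as an `Option` (`none` iff `k = 0`). -/
def finProd {S : Type*} [Mul S] {k : ℕ} (s : Fin k → S) : Option S :=
  (List.ofFn s).foldl (optStep (· * ·)) none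

/-- A multiplicative structure is `k`-permutable if every product of `k` elements is
preserved by some non-identity permutation of its factors. -/
def KPermutable (S : Type*) [Mul S] (k : ℕ) : Prop :=
  ∀ s : Fin k → S, ∃ σ : Equiv.Perm (Fin k), σ ≠ Equiv.refl (Fin k) ∧
    finProd (fun i => s (σ i)) = finProd s

/-- A semigroup is strongly permutable if it is `k`-permutable for some `k ≥ 2`. -/
def StronglyPermutable (S : Type*) [Mul S] : Prop :=
  ∃ k : ℕ, 2 ≤ k ∧ KPermutable S k

/-- A semigroup is weakly permutable if for some `k ≥ 2`, any product of `k` elements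
is computed identically by two distinct permutations of its factors. -/
def WeaklyPermutable (S : Type*) [Mul S] : Prop :=
  ∃ k : ℕ, 2 ≤ k ∧ ∀ s : Fin k → S, ∃ σ τ : Equiv.Perm (Fin k), σ ≠ τ ∧
    finProd (fun i => s (σ i)) = finProd (fun i => s (τ i))

/-- Isomorphism of semirings (bijection preserving addition and multiplication). -/
def RingLikeIso (S T : Type*) [Add S] [Mul S] [Add T] [Mul T] : Prop :=
  ∃ f : S → T, Function.Bijective f ∧ (∀ a b : S, f (a + b) = f a + f b) ∧
    (∀ a b : S, f (a * b) = f a * f b)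

/-! ### Matrices. -/

/-- Square `n × n` matrices over `S`. -/
def MatSR (S : Type u) (n : ℕ) : Type u := Fin n → Fin n → S

/-- Matrix multiplication, `(A*B) i j = Σ_k (A i k * B k j)`.  (For `n ≥ 1` — the only
case of interest — the `getD` default value is never used.) -/
def matMul {S : Type*} [Add S] [Mul S] {n : ℕ} (A B : MatSR S n) : MatSR S n :=
  fun i j => (finSum (fun k : Fin n => A i k * B k j)).getD (A i j * B i j)

/-- The multiplicative semigroup `M_n(S)`. -/
instance {S : Type*} [Add S] [Mul S] {n : ℕ} : Mul (MatSR S n) := ⟨matMul⟩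

/-! ### `S⁰`: adjoining a zero, and upper triangular matrices. -/

/-- `S` with a zero (additively neutral, multiplicatively absorbing) element adjoined. -/
inductive Adj0 (S : Type u) : Type u
  | zero : Adj0 S
  | elem : S → Adj0 S

namespace Adj0

def add' {S : Type*} [Add S] : Adj0 S → Adj0 S → Adj0 S
  | .zero, b => b
  | .elem a, .zero => .elem a
  | .elem a, .elem b => .elem (a + b)

def mul' {S : Type*} [Mul S] : Adj0 S → Adj0 S → Adj0 S
  | .zero, _ => .zero
  | .elem _, .zero => .zero
  | .elem a, .elem b => .elem (a * b)

instance {S : Type*} [Add S] : Add (Adj0 S) := ⟨add'⟩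
instance {S : Type*} [Mul S] : Mul (Adj0 S) := ⟨mul'⟩

@[simp] lemma zero_add {S : Type*} [Add S] (b : Adj0 S) : (zero : Adj0 S) + b = b := rfl
@[simp] lemma add_zero {S : Type*} [Add S] (a : Adj0 S) : a + (zero : Adj0 S) = a := by
  cases a <;> rfl
@[simp] lemma elem_add_elem {S : Type*} [Add S] (a b : S) :
    (elem a : Adj0 S) + elem b = elem (a + b) := rfl
@[simp] lemma zero_mul {S : Type*} [Mul S] (b : Adj0 S) : (zero : Adj0 S) * b = zero := rfl
@[simp] lemma mul_zero {S : Type*} [Mul S] (a : Adj0 S) : a * (zero : Adj0 S) = zero := by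
  cases a <;> rfl
@[simp] lemma elem_mul_elem {S : Type*} [Mul S] (a b : S) :
    (elem a : Adj0 S) * elem b = elem (a * b) := rfl

lemma add_eq_zero_iff {S : Type*} [Add S] (a b : Adj0 S) :
    a + b = zero ↔ a = zero ∧ b = zero := by
  cases a <;> cases b <;> simp

end Adj0

lemma foldl_optStep_adj0 {S : Type*} [Add S] (l : List (Adj0 S)) (a : Adj0 S) :
    ∃ c : Adj0 S, l.foldl (optStep (· + ·)) (some a) = some c ∧
      (c = Adj0.zero ↔ a = Adj0.zero ∧ ∀ x ∈ l, x = Adj0.zero) := by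
  induction l generalizing a with
  | nil => exact ⟨a, rfl, by simp⟩
  | cons x l ih =>
    obtain ⟨c, hc, hiff⟩ := ih (a + x)
    refine ⟨c, ?_, ?_⟩
    · simpa [optStep] using hc
    · rw [hiff, Adj0.add_eq_zero_iff]
      simp only [List.mem_cons, forall_eq_or_imp]
      tauto

lemma finSum_adj0_eq_zero {S : Type*} [Add S] {n : ℕ} (f : Fin n → Adj0 S) (i : Fin n)
    (d : Adj0 S) (h : ∀ k, f k = Adj0.zero) : (finSum f).getD d = Adj0.zero := by
  cases n with
  | zero => exact i.elim0
  | succ m =>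
    rw [finSum, List.ofFn_succ, List.foldl_cons]
    obtain ⟨c, hc, hiff⟩ := foldl_optStep_adj0 (List.ofFn fun i : Fin m => f i.succ) (f 0)
    rw [show optStep (· + ·) none (f 0) = some (f 0) from rfl, hc]
    have : c = Adj0.zero := hiff.mpr ⟨h 0, by
      intro x hx
      rw [List.mem_ofFn] at hx
      obtain ⟨j, rfl⟩ := hx
      exact h _⟩
    simp [this]

lemma finSum_adj0_ne_zero {S : Type*} [Add S] {n : ℕ} (f : Fin n → Adj0 S) (i : Fin n)
    (d : Adj0 S) (h : f i ≠ Adj0.zero) : (finSum f).getD d ≠ Adj0.zero := by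
  cases n with
  | zero => exact i.elim0
  | succ m =>
    rw [finSum, List.ofFn_succ, List.foldl_cons]
    obtain ⟨c, hc, hiff⟩ := foldl_optStep_adj0 (List.ofFn fun i : Fin m => f i.succ) (f 0)
    rw [show optStep (· + ·) none (f 0) = some (f 0) from rfl, hc]
    simp only [Option.getD_some]
    intro hcz
    obtain ⟨h0, hall⟩ := hiff.mp hcz
    induction i using Fin.cases with
    | zero => exact h h0
    | succ j => exact h (hall _ (List.mem_ofFn.mpr ⟨j, rfl⟩))

/-- Upper-triangularity over `S⁰`: entries strictly below the diagonal are the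
adjoined zero; entries on and above the diagonal lie in `S`. -/
def IsUT {S : Type*} {n : ℕ} (A : MatSR (Adj0 S) n) : Prop :=
  (∀ i j : Fin n, (j : ℕ) < (i : ℕ) → A i j = Adj0.zero) ∧
  (∀ i j : Fin n, (i : ℕ) ≤ (j : ℕ) → ∃ s : S, A i j = Adj0.elem s)

lemma IsUT.mul {S : Type*} [Add S] [Mul S] {n : ℕ} {A B : MatSR (Adj0 S) n}
    (hA : IsUT A) (hB : IsUT B) : IsUT (matMul A B) := by
  constructor
  · intro i j hji
    apply finSum_adj0_eq_zero _ i
    intro k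
    rcases le_or_gt (i : ℕ) (k : ℕ) with h | h
    · rw [hB.1 k j (lt_of_lt_of_le hji h), Adj0.mul_zero]
    · rw [hA.1 i k h, Adj0.zero_mul]
  · intro i j hij
    have hne : matMul A B i j ≠ Adj0.zero := by
      apply finSum_adj0_ne_zero _ i
      obtain ⟨s, hs⟩ := hA.2 i i le_rfl
      obtain ⟨t, ht⟩ := hB.2 i j hij
      rw [hs, ht, Adj0.elem_mul_elem]
      simp
    cases hc : matMul A B i j with
    | zero => exact absurd hc hne
    | elem s => exact ⟨s, rfl⟩

/-- The multiplicative semigroup `UT_n(S)` of upper triangular matrices over `S⁰`. -/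
def UTMat (S : Type u) (n : ℕ) : Type u := {A : MatSR (Adj0 S) n // IsUT A}

instance {S : Type*} [Add S] [Mul S] {n : ℕ} : Mul (UTMat S n) :=
  ⟨fun A B => ⟨matMul A.1 B.1, A.2.mul B.2⟩⟩

/-! ### `S^{01}`: adjoining a zero and an identity, and unitriangular matrices. -/

/-- `S` with a zero and a multiplicative identity adjoined (`S^{01}` in the paper).
The sum of `one` and an `elem` is left undefined in the paper; it is given an
arbitrary value here, and never arises in products of unitriangular matrices. -/
inductive Adj01 (S : Type u) : Type u
  | zero : Adj01 S
  | one : Adj01 S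
  | elem : S → Adj01 S

namespace Adj01

def add' {S : Type*} [Add S] : Adj01 S → Adj01 S → Adj01 S
  | .zero, b => b
  | a, .zero => a
  | .one, .one => .one
  | .one, .elem b => .elem b
  | .elem a, .one => .elem a
  | .elem a, .elem b => .elem (a + b)

def mul' {S : Type*} [Mul S] : Adj01 S → Adj01 S → Adj01 S
  | .zero, _ => .zero
  | _, .zero => .zero
  | .one, b => b
  | a, .one => a
  | .elem a, .elem b => .elem (a * b)

instance {S : Type*} [Add S] : Add (Adj01 S) := ⟨add'⟩
instance {S : Type*} [Mul S] : Mul (Adj01 S) := ⟨mul'⟩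

@[simp] lemma zero_add {S : Type*} [Add S] (b : Adj01 S) : (zero : Adj01 S) + b = b := by
  cases b <;> rfl
@[simp] lemma add_zero {S : Type*} [Add S] (a : Adj01 S) : a + (zero : Adj01 S) = a := by
  cases a <;> rfl
@[simp] lemma one_add_one {S : Type*} [Add S] : (one : Adj01 S) + one = one := rfl
@[simp] lemma elem_add_elem {S : Type*} [Add S] (a b : S) :
    (elem a : Adj01 S) + elem b = elem (a + b) := rfl
@[simp] lemma one_add_elem {S : Type*} [Add S] (b : S) :
    (one : Adj01 S) + elem b = elem b := rfl
@[simp] lemma elem_add_one {S : Type*} [Add S] (a : S) :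
    (elem a : Adj01 S) + one = elem a := rfl
@[simp] lemma zero_mul {S : Type*} [Mul S] (b : Adj01 S) : (zero : Adj01 S) * b = zero := by
  cases b <;> rfl
@[simp] lemma mul_zero {S : Type*} [Mul S] (a : Adj01 S) : a * (zero : Adj01 S) = zero := by
  cases a <;> rfl
@[simp] lemma one_mul {S : Type*} [Mul S] (b : Adj01 S) : (one : Adj01 S) * b = b := by
  cases b <;> rfl
@[simp] lemma mul_one {S : Type*} [Mul S] (a : Adj01 S) : a * (one : Adj01 S) = a := by
  cases a <;> rfl
@[simp] lemma elem_mul_elem {S : Type*} [Mul S] (a b : S) :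
    (elem a : Adj01 S) * elem b = elem (a * b) := rfl

lemma mul_ne_one {S : Type*} [Mul S] {a b : Adj01 S} (ha : a ≠ one) (hb : b ≠ one) :
    a * b ≠ one := by
  cases a <;> cases b <;> simp_all

lemma add_ne_one {S : Type*} [Add S] {a b : Adj01 S} (ha : a ≠ one) (hb : b ≠ one) :
    a + b ≠ one := by
  cases a <;> cases b <;> simp_all

lemma add_01 {S : Type*} [Add S] {a b : Adj01 S} (ha : a = zero ∨ a = one)
    (hb : b = zero ∨ b = one) :
    (a + b = zero ∨ a + b = one) ∧ (a + b = one ↔ a = one ∨ b = one) := by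
  rcases ha with rfl | rfl <;> rcases hb with rfl | rfl <;> simp

end Adj01

lemma foldl_optStep_adj01 {S : Type*} [Add S] (l : List (Adj01 S)) (a : Adj01 S)
    (ha : a = Adj01.zero ∨ a = Adj01.one) (hl : ∀ x ∈ l, x = Adj01.zero ∨ x = Adj01.one) :
    ∃ c : Adj01 S, l.foldl (optStep (· + ·)) (some a) = some c ∧
      (c = Adj01.zero ∨ c = Adj01.one) ∧
      (c = Adj01.one ↔ a = Adj01.one ∨ ∃ x ∈ l, x = Adj01.one) := by
  induction l generalizing a with
  | nil => exact ⟨a, rfl, ha, by simp⟩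
  | cons x l ih =>
    have hx := hl x (by simp)
    have key := Adj01.add_01 ha hx
    obtain ⟨c, hc, hc01, hiff⟩ := ih (a + x) key.1 (fun y hy => hl y (by simp [hy]))
    refine ⟨c, by simpa [optStep] using hc, hc01, ?_⟩
    rw [hiff, key.2]
    simp only [List.mem_cons, exists_eq_or_imp]
    tauto

lemma foldl_optStep_adj01_ne_one {S : Type*} [Add S] (l : List (Adj01 S)) (a : Adj01 S)
    (ha : a ≠ Adj01.one) (hl : ∀ x ∈ l, x ≠ Adj01.one) :
    ∃ c : Adj01 S, l.foldl (optStep (· + ·)) (some a) = some c ∧ c ≠ Adj01.one := by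
  induction l generalizing a with
  | nil => exact ⟨a, rfl, ha⟩
  | cons x l ih =>
    have hax : a + x ≠ Adj01.one := Adj01.add_ne_one ha (hl x (by simp))
    obtain ⟨c, hc, hcne⟩ := ih (a + x) hax (fun y hy => hl y (by simp [hy]))
    exact ⟨c, by simpa [optStep] using hc, hcne⟩

lemma finSum_adj01_eq_one {S : Type*} [Add S] {n : ℕ} (f : Fin n → Adj01 S) (i : Fin n)
    (d : Adj01 S) (h01 : ∀ k, f k = Adj01.zero ∨ f k = Adj01.one) (hi : f i = Adj01.one) :
    (finSum f).getD d = Adj01.one := by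
  cases n with
  | zero => exact i.elim0
  | succ m =>
    rw [finSum, List.ofFn_succ, List.foldl_cons]
    obtain ⟨c, hc, _, hiff⟩ := foldl_optStep_adj01 (List.ofFn fun i : Fin m => f i.succ) (f 0)
      (h01 0) (by
        intro x hx
        rw [List.mem_ofFn] at hx
        obtain ⟨j, rfl⟩ := hx
        exact h01 _)
    rw [show optStep (· + ·) none (f 0) = some (f 0) from rfl, hc]
    simp only [Option.getD_some]
    apply hiff.mpr
    induction i using Fin.cases with
    | zero => exact Or.inl hi
    | succ j => exact Or.inr ⟨f j.succ, List.mem_ofFn.mpr ⟨j, rfl⟩, hi⟩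

lemma finSum_adj01_eq_zero {S : Type*} [Add S] {n : ℕ} (f : Fin n → Adj01 S) (i : Fin n)
    (d : Adj01 S) (h : ∀ k, f k = Adj01.zero) : (finSum f).getD d = Adj01.zero := by
  cases n with
  | zero => exact i.elim0
  | succ m =>
    rw [finSum, List.ofFn_succ, List.foldl_cons]
    obtain ⟨c, hc, hc01, hiff⟩ := foldl_optStep_adj01 (List.ofFn fun i : Fin m => f i.succ)
      (f 0) (Or.inl (h 0)) (by
        intro x hx
        rw [List.mem_ofFn] at hx
        obtain ⟨j, rfl⟩ := hx
        exact Or.inl (h _))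
    rw [show optStep (· + ·) none (f 0) = some (f 0) from rfl, hc]
    simp only [Option.getD_some]
    rcases hc01 with h' | h'
    · exact h'
    · exfalso
      rcases hiff.mp h' with h'' | ⟨x, hx, hx1⟩
      · rw [h 0] at h''; exact nomatch h''
      · rw [List.mem_ofFn] at hx
        obtain ⟨j, rfl⟩ := hx
        rw [h _] at hx1; exact nomatch hx1

lemma finSum_adj01_ne_one {S : Type*} [Add S] {n : ℕ} (f : Fin n → Adj01 S) (i : Fin n)
    (d : Adj01 S) (h : ∀ k, f k ≠ Adj01.one) : (finSum f).getD d ≠ Adj01.one := by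
  cases n with
  | zero => exact i.elim0
  | succ m =>
    rw [finSum, List.ofFn_succ, List.foldl_cons]
    obtain ⟨c, hc, hcne⟩ := foldl_optStep_adj01_ne_one (List.ofFn fun i : Fin m => f i.succ)
      (f 0) (h 0) (by
        intro x hx
        rw [List.mem_ofFn] at hx
        obtain ⟨j, rfl⟩ := hx
        exact h _)
    rw [show optStep (· + ·) none (f 0) = some (f 0) from rfl, hc]
    simpa using hcne

/-- Unitriangularity over `S^{01}`: the adjoined zero strictly below the diagonal, the
adjoined identity on the diagonal, and entries of `S⁰` (i.e. anything except the
adjoined identity) strictly above the diagonal. -/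
def IsU {S : Type*} {n : ℕ} (A : MatSR (Adj01 S) n) : Prop :=
  (∀ i j : Fin n, (j : ℕ) < (i : ℕ) → A i j = Adj01.zero) ∧
  (∀ i : Fin n, A i i = Adj01.one) ∧
  (∀ i j : Fin n, (i : ℕ) < (j : ℕ) → A i j ≠ Adj01.one)

lemma IsU.mul {S : Type*} [Add S] [Mul S] {n : ℕ} {A B : MatSR (Adj01 S) n}
    (hA : IsU A) (hB : IsU B) : IsU (matMul A B) := by
  refine ⟨?_, ?_, ?_⟩
  · intro i j hji
    apply finSum_adj01_eq_zero _ i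
    intro k
    rcases le_or_gt (i : ℕ) (k : ℕ) with h | h
    · rw [hB.1 k j (lt_of_lt_of_le hji h), Adj01.mul_zero]
    · rw [hA.1 i k h, Adj01.zero_mul]
  · intro i
    apply finSum_adj01_eq_one _ i
    · intro k
      rcases lt_trichotomy (k : ℕ) (i : ℕ) with h | h | h
      · rw [hA.1 i k h, Adj01.zero_mul]; exact Or.inl rfl
      · have : k = i := Fin.ext h
        subst this
        rw [hA.2.1 k, hB.2.1 k, Adj01.one_mul]; exact Or.inr rfl
      · rw [hB.1 k i h, Adj01.mul_zero]; exact Or.inl rfl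
    · rw [hA.2.1 i, hB.2.1 i, Adj01.one_mul]
  · intro i j hij
    apply finSum_adj01_ne_one _ i
    intro k
    rcases lt_trichotomy (k : ℕ) (i : ℕ) with h | h | h
    · rw [hA.1 i k h, Adj01.zero_mul]; exact fun h => nomatch h
    · have : k = i := Fin.ext h
      subst this
      rw [hA.2.1 k, Adj01.one_mul]
      exact hB.2.2 k j (by omega)
    · rcases lt_trichotomy (k : ℕ) (j : ℕ) with h' | h' | h'
      · exact Adj01.mul_ne_one (hA.2.2 i k h) (hB.2.2 k j h')
      · have : k = j := Fin.ext h'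
        subst this
        rw [hB.2.1 k, Adj01.mul_one]
        exact hA.2.2 i k h
      · rw [hB.1 k j h', Adj01.mul_zero]; exact fun h => nomatch h

/-- The multiplicative monoid `U_n(S)` of unitriangular matrices over `S^{01}`. -/
def UMat (S : Type u) (n : ℕ) : Type u := {A : MatSR (Adj01 S) n // IsU A}

instance {S : Type*} [Add S] [Mul S] {n : ℕ} : Mul (UMat S n) :=
  ⟨fun A B => ⟨matMul A.1 B.1, A.2.mul B.2⟩⟩

/-! ### Monogenic subsemirings. -/

/-- The carrier of the monogenic subsemiring `⟨a⟩` generated by `a` is the set of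
positive powers of `a`; in a bipotent semiring it is closed under addition. -/
instance genAdd {S : Type*} [BipotentSemiring S] (a : S) : Add ↥(Set.range (mpow a)) :=
  ⟨fun p q => ⟨p.1 + q.1, by
    rcases BipotentSemiring.bipotent p.1 q.1 with h | h <;> rw [h]
    exacts [p.2, q.2]⟩⟩

instance genMul {S : Type*} [BipotentSemiring S] (a : S) : Mul ↥(Set.range (mpow a)) :=
  ⟨fun p q => ⟨p.1 * q.1, by
    obtain ⟨m, hm⟩ := p.2
    obtain ⟨n, hn⟩ := q.2
    exact ⟨m + n + 1, by rw [← hm, ← hn, mpow_mul_mpow]⟩⟩⟩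

/-! ### Concrete bipotent semirings. -/

/-- The tropical semiring `ℕ_max` of positive natural numbers: addition is `max`,
multiplication is ordinary addition. -/
def NMax : Type := {n : ℕ // 0 < n}

instance : Add NMax := ⟨fun a b => ⟨max a.1 b.1, by have := a.2; have := b.2; omega⟩⟩
instance : Mul NMax := ⟨fun a b => ⟨a.1 + b.1, by have := a.2; have := b.2; omega⟩⟩

/-- The tropical semiring `(-ℕ)_max` of negative integers: addition is `max`,
multiplication is ordinary addition. -/
def NegNMax : Type := {z : ℤ // z < 0}

instance : Add NegNMax := ⟨fun a b => ⟨max a.1 b.1, by have := a.2; have := b.2; omega⟩⟩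
instance : Mul NegNMax := ⟨fun a b => ⟨a.1 + b.1, by have := a.2; have := b.2; omega⟩⟩

/-- The truncated tropical semiring `[k]_max` on `{1,…,k}`: addition is `max`,
multiplication is `a·b = min (a+b) k`. -/
def KMax (k : ℕ) : Type := {n : ℕ // 0 < n ∧ n ≤ k}

instance {k : ℕ} : Add (KMax k) :=
  ⟨fun a b => ⟨max a.1 b.1, by have := a.2; have := b.2; omega⟩⟩
instance {k : ℕ} : Mul (KMax k) :=
  ⟨fun a b => ⟨min (a.1 + b.1) k, by have := a.2; have := b.2; omega⟩⟩

/-- The truncated tropical semiring `[-k]_max` on `{-k,…,-1}`: addition is `max`,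
multiplication is `a·b = max (a+b) (-k)`. -/
def NegKMax (k : ℕ) : Type := {z : ℤ // -(k : ℤ) ≤ z ∧ z ≤ -1}

instance {k : ℕ} : Add (NegKMax k) :=
  ⟨fun a b => ⟨max a.1 b.1, by have := a.2; have := b.2; omega⟩⟩
instance {k : ℕ} : Mul (NegKMax k) :=
  ⟨fun a b => ⟨max (a.1 + b.1) (-(k : ℤ)), by have := a.2; have := b.2; omega⟩⟩

/-- The two-element boolean semifield `𝔹`: `{0,1}` with `0 < 1`, addition `max` (= "or")
and the usual multiplication (= "and"). -/
def BoolSR : Type := Bool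

instance : Add BoolSR := ⟨fun a b => (Bool.or a b : Bool)⟩
instance : Mul BoolSR := ⟨fun a b => (Bool.and a b : Bool)⟩

/-- A chain semiring: a linearly ordered set with addition `max` and multiplication `min`. -/
def ChainSR (L : Type u) [LinearOrder L] : Type u := L

instance {L : Type u} [LinearOrder L] : Add (ChainSR L) := ⟨fun a b => (max a b : L)⟩
instance {L : Type u} [LinearOrder L] : Mul (ChainSR L) := ⟨fun a b => (min a b : L)⟩

/-- The three-element commutative bipotent semiring of Proposition 1: order `A < B < C`
(addition is `max`), every element multiplicatively idempotent, and all products of two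
distinct elements equal to `B`. -/
inductive Three : Type
  | A : Three
  | B : Three
  | C : Three
deriving DecidableEq

instance : Fintype Three where
  elems := ⟨↑[Three.A, Three.B, Three.C], by simp⟩
  complete := fun x => by cases x <;> simp

def Three.add' : Three → Three → Three
  | .A, y => y
  | x, .A => x
  | .B, y => y
  | x, .B => x
  | .C, .C => .C

def Three.mul' : Three → Three → Three
  | .A, .A => .A
  | .B, .B => .B
  | .C, .C => .C
  | _, _ => .B

instance : Add Three := ⟨Three.add'⟩
instance : Mul Three := ⟨Three.mul'⟩

instance : CommBipotentSemiring Three where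
  nonempty' := ⟨Three.A⟩
  add_assoc' := by decide
  add_comm' := by decide
  mul_assoc' := by decide
  left_distrib' := by decide
  right_distrib' := by decide
  bipotent := by decide
  mul_comm' := by decide

/-- A bundled (possibly zero-less and identity-less) semiring, used to quantify over
semirings inside hypotheses. -/
structure BundledSemiring : Type 1 where
  carrier : Type
  add : carrier → carrier → carrier
  mul : carrier → carrier → carrier
  nonempty' : Nonempty carrier
  add_assoc' : ∀ a b c, add (add a b) c = add a (add b c)
  add_comm' : ∀ a b, add a b = add b a
  mul_assoc' : ∀ a b c, mul (mul a b) c = mul a (mul b c)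
  left_distrib' : ∀ a b c, mul a (add b c) = add (mul a b) (mul a c)
  right_distrib' : ∀ a b c, mul (add a b) c = add (mul a c) (mul b c)

/-! ### Semifields. -/

/-- `z` is a zero element: additively neutral and multiplicatively absorbing. -/
def IsZeroElem {S : Type*} [Add S] [Mul S] (z : S) : Prop :=
  ∀ x : S, z + x = x ∧ x + z = x ∧ z * x = z ∧ x * z = z

/-- `S` is a semifield: a commutative semiring, possibly without zero, whose set of
non-zero elements forms a group under multiplication (with identity `e`). -/
def IsSemifield (S : Type*) [Add S] [Mul S] : Prop :=
  ∃ e : S, ¬ IsZeroElem e ∧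
    (∀ x : S, ¬ IsZeroElem x → e * x = x ∧ x * e = x) ∧
    (∀ x y : S, ¬ IsZeroElem x → ¬ IsZeroElem y → ¬ IsZeroElem (x * y)) ∧
    (∀ x : S, ¬ IsZeroElem x → ∃ y : S, ¬ IsZeroElem y ∧ x * y = e ∧ y * x = e)

/-! ### Truncated tropical semirings. -/

/-- The underlying set `[x,y] ∪ {0}` of the truncated tropical semiring `𝕋_{[x,y]}`
(without the zero element `-∞`), for `0 ≤ x`.  Addition is `max`; multiplication is
`y`-truncated addition `a ⊗ b = min (a+b) y`, with the element `0` acting as the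
multiplicative identity. -/
def TTb (x y : ℝ) (_hx : 0 ≤ x) : Type := {r : ℝ // r = 0 ∨ (x ≤ r ∧ r ≤ y)}

namespace TTb

protected def add {x y : ℝ} {hx : 0 ≤ x} (a b : TTb x y hx) : TTb x y hx :=
  ⟨max a.1 b.1, by rcases max_choice a.1 b.1 with h | h <;> rw [h]
                   exacts [a.2, b.2]⟩

protected noncomputable def mul {x y : ℝ} {hx : 0 ≤ x} (a b : TTb x y hx) : TTb x y hx :=
  if ha : a.1 = 0 then b else if hb : b.1 = 0 then a else
    ⟨min (a.1 + b.1) y, by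
      rcases a.2 with h | h
      · exact absurd h ha
      rcases b.2 with h' | h'
      · exact absurd h' hb
      right
      exact ⟨le_min (by linarith [h.1, h'.1]) (by linarith [h.1, h.2]), min_le_right _ _⟩⟩

instance {x y : ℝ} {hx : 0 ≤ x} : Add (TTb x y hx) := ⟨TTb.add⟩
noncomputable instance {x y : ℝ} {hx : 0 ≤ x} : Mul (TTb x y hx) := ⟨TTb.mul⟩

end TTb

/-- The truncated tropical semiring `𝕋_{[x,y]}` (for `0 ≤ x < y`): the real interval
`[x,y]` together with a multiplicative identity `0` and a zero `-∞`, with addition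
`max` and multiplication the `y`-truncated addition `a ⊗ b = min (a+b) y`. -/
abbrev TT (x y : ℝ) (hx : 0 ≤ x) : Type := Adj0 (TTb x y hx)

/-- The multiplicative identity `0` of `𝕋_{[x,y]}`. -/
noncomputable def ttId (x y : ℝ) (hx : 0 ≤ x) : TT x y hx := Adj0.elem ⟨0, Or.inl rfl⟩

lemma ttId_mul {x y : ℝ} {hx : 0 ≤ x} (b : TT x y hx) : ttId x y hx * b = b := by
  cases b with
  | zero => rfl
  | elem e =>
    show Adj0.elem (TTb.mul ⟨0, Or.inl rfl⟩ e) = Adj0.elem e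
    simp [TTb.mul]

/-- The subsemigroup `S` of `M_2(𝕋_{[1,z]})` of matrices of the form `[[0,a],[-∞,b]]`. -/
noncomputable def UpperS (z : ℝ) (hz : (0:ℝ) ≤ 1) : Type :=
  {A : MatSR (TT 1 z hz) 2 // A 0 0 = ttId 1 z hz ∧ A 1 0 = Adj0.zero}

/-- The subsemigroup `S'` of `M_2(𝕋_{[1,z]})` of matrices of the form `[[0,-∞],[a,b]]`. -/
noncomputable def LowerS (z : ℝ) (hz : (0:ℝ) ≤ 1) : Type :=
  {A : MatSR (TT 1 z hz) 2 // A 0 0 = ttId 1 z hz ∧ A 0 1 = Adj0.zero}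

noncomputable instance {z : ℝ} {hz : (0:ℝ) ≤ 1} : Mul (UpperS z hz) :=
  ⟨fun A B => ⟨A.1 * B.1, by
    obtain ⟨hA1, hA2⟩ := A.2
    obtain ⟨hB1, hB2⟩ := B.2
    constructor
    · show A.1 0 0 * B.1 0 0 + A.1 0 1 * B.1 1 0 = ttId 1 z hz
      rw [hA1, hB1, hB2, ttId_mul, Adj0.mul_zero, Adj0.add_zero]
    · show A.1 1 0 * B.1 0 0 + A.1 1 1 * B.1 1 0 = Adj0.zero
      rw [hA2, hB2, Adj0.zero_mul, Adj0.mul_zero, Adj0.add_zero]⟩⟩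

noncomputable instance {z : ℝ} {hz : (0:ℝ) ≤ 1} : Mul (LowerS z hz) :=
  ⟨fun A B => ⟨A.1 * B.1, by
    obtain ⟨hA1, hA2⟩ := A.2
    obtain ⟨hB1, hB2⟩ := B.2
    constructor
    · show A.1 0 0 * B.1 0 0 + A.1 0 1 * B.1 1 0 = ttId 1 z hz
      rw [hA1, hB1, hA2, ttId_mul, Adj0.zero_mul, Adj0.add_zero]
    · show A.1 0 0 * B.1 0 1 + A.1 0 1 * B.1 1 1 = Adj0.zero
      rw [hA1, hB2, hA2, ttId_mul, Adj0.zero_mul, Adj0.add_zero]⟩⟩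

/-! Strong permutability passes to subsemigroups and to homomorphic images. `M_m(S)` embeds
into `M_n(S)` by repeating the last row and column: a sum in a bipotent semiring is its largest
summand, so it ignores repeated summands and the embedding is multiplicative. `UT_m(S)` is the
image of `UT_n(S)` under taking the upper left `m × m` corner, which is multiplicative because
the entries below the diagonal are zero. -/

section Permutability

variable {T U : Type*} [Mul T] [Mul U]

lemma foldl_optStep_map (f : T →ₙ* U) (l : List T) (o : Option T) :
    (l.map f).foldl (optStep (· * ·)) (o.map f) = (l.foldl (optStep (· * ·)) o).map f := by
  induction l generalizing o with
  | nil => rfl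
  | cons x l ih =>
    rw [List.map_cons, List.foldl_cons, List.foldl_cons, ← ih]
    cases o <;> simp [optStep]

lemma finProd_map (f : T →ₙ* U) {k : ℕ} (s : Fin k → T) :
    finProd (fun i => f (s i)) = (finProd s).map f := by
  rw [finProd, finProd, ← foldl_optStep_map, List.map_ofFn]
  rfl

lemma KPermutable.of_injective (f : T →ₙ* U) (hf : Function.Injective f) {k : ℕ}
    (h : KPermutable U k) : KPermutable T k := by
  intro s
  obtain ⟨σ, hσ, heq⟩ := h (fun i => f (s i))
  refine ⟨σ, hσ, Option.map_injective hf ?_⟩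
  rwa [← finProd_map, ← finProd_map]

lemma KPermutable.of_surjective (f : U →ₙ* T) (hf : Function.Surjective f) {k : ℕ}
    (h : KPermutable U k) : KPermutable T k := by
  intro s
  choose g hg using hf
  obtain ⟨σ, hσ, heq⟩ := h (fun i => g (s i))
  refine ⟨σ, hσ, ?_⟩
  simpa only [← finProd_map, hg] using congrArg (Option.map f) heq

lemma StronglyPermutable.of_injective (f : T →ₙ* U) (hf : Function.Injective f)
    (h : StronglyPermutable U) : StronglyPermutable T :=
  let ⟨k, hk, hU⟩ := h
  ⟨k, hk, hU.of_injective f hf⟩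

lemma StronglyPermutable.of_surjective (f : U →ₙ* T) (hf : Function.Surjective f)
    (h : StronglyPermutable U) : StronglyPermutable T :=
  let ⟨k, hk, hU⟩ := h
  ⟨k, hk, hU.of_surjective f hf⟩

end Permutability

lemma foldl_optStep_some {A : Type*} (op : A → A → A) (l : List A) (a : A) :
    l.foldl (optStep op) (some a) = some (l.foldl op a) := by
  induction l generalizing a with
  | nil => rfl
  | cons x l ih => exact ih (op a x)

lemma finSum_succ {A : Type*} [Add A] {k : ℕ} (f : Fin (k + 1) → A) :
    finSum f = some ((List.ofFn fun i : Fin k => f i.succ).foldl (· + ·) (f 0)) := by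
  rw [finSum, List.ofFn_succ, List.foldl_cons]
  exact foldl_optStep_some _ _ _

lemma foldl_add_of_forall_add_eq_self {A : Type*} [Add A] {l : List A}
    (hl : ∀ x ∈ l, ∀ b, b + x = b) (a : A) : l.foldl (· + ·) a = a := by
  induction l generalizing a with
  | nil => rfl
  | cons x l ih =>
    rw [List.foldl_cons, hl x List.mem_cons_self, ih fun y hy => hl y (List.mem_cons_of_mem x hy)]

lemma finSum_castLE_of_forall_add_eq_self {A : Type*} [Add A] {m n : ℕ} (hm : 0 < m)
    (h : m ≤ n) (f : Fin n → A) (hf : ∀ k : Fin n, m ≤ k → ∀ b, b + f k = b) :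
    finSum f = finSum fun i : Fin m => f (Fin.castLE h i) := by
  obtain ⟨d, rfl⟩ := Nat.exists_eq_add_of_le h
  obtain ⟨m, rfl⟩ := Nat.exists_eq_add_one_of_ne_zero hm.ne'
  rw [finSum, List.ofFn_add, List.foldl_append, ← finSum, finSum_succ, foldl_optStep_some,
    foldl_add_of_forall_add_eq_self]
  simp only [List.mem_ofFn, forall_exists_index, forall_apply_eq_imp_iff]
  exact fun i => hf _ (by simp)

section Bipotent

variable {S : Type*} [BipotentSemiring S]

lemma BipotentSemiring.add_self (a : S) : a + a = a :=
  (bipotent a a).elim id id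

lemma BipotentSemiring.add_eq_self_of_add_add_eq_self {r a b : S} (h : r + (a + b) = r) :
    r + a = r ∧ r + b = r := by
  constructor
  · rw [← h, PlainSemiring.add_assoc', PlainSemiring.add_comm' (a + b) a,
      ← PlainSemiring.add_assoc' a a, add_self]
  · rw [← h, PlainSemiring.add_assoc', PlainSemiring.add_assoc' a, add_self]

lemma BipotentSemiring.foldl_add_mem_and_absorbs (l : List S) (a : S) :
    l.foldl (· + ·) a ∈ a :: l ∧
      ∀ x ∈ a :: l, l.foldl (· + ·) a + x = l.foldl (· + ·) a := by
  induction l generalizing a with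
  | nil => simpa using add_self a
  | cons y l ih =>
    obtain ⟨hmem, habs⟩ := ih (a + y)
    obtain ⟨hra, hry⟩ := add_eq_self_of_add_add_eq_self (habs _ List.mem_cons_self)
    rw [List.foldl_cons]
    refine ⟨?_, ?_⟩
    · rcases List.mem_cons.mp hmem with h | h
      · rw [h]
        rcases bipotent a y with hay | hay <;> rw [hay] <;> simp
      · simp [h]
    · simp only [List.mem_cons, forall_eq_or_imp] at habs ⊢
      exact ⟨hra, hry, habs.2⟩

lemma BipotentSemiring.exists_finSum_eq {k : ℕ} (f : Fin (k + 1) → S) :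
    ∃ c ∈ Set.range f, finSum f = some c ∧ ∀ x ∈ Set.range f, c + x = c := by
  obtain ⟨hmem, habs⟩ := foldl_add_mem_and_absorbs (List.ofFn fun i : Fin k => f i.succ) (f 0)
  simp only [← List.ofFn_succ, List.mem_ofFn] at hmem habs
  exact ⟨_, hmem, finSum_succ f, fun x hx => habs x hx⟩

lemma BipotentSemiring.finSum_eq_of_range_eq {k l : ℕ} {f : Fin k → S} {g : Fin l → S}
    (h : Set.range f = Set.range g) : finSum f = finSum g := by
  cases k with
  | zero =>
    cases l with
    | zero => rfl
    | succ l => exact (Set.range_eq_empty f ▸ h ▸ Set.mem_range_self (f := g) 0).elim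
  | succ k =>
    cases l with
    | zero => exact (Set.range_eq_empty g ▸ h ▸ Set.mem_range_self (f := f) 0).elim
    | succ l =>
      obtain ⟨c, hcf, hf, hc⟩ := exists_finSum_eq f
      obtain ⟨d, hdg, hg, hd⟩ := exists_finSum_eq g
      rw [hf, hg, ← hc d (h ▸ hdg), PlainSemiring.add_comm', hd c (h ▸ hcf)]

end Bipotent

lemma Fin.clamp_val_eq_self {m : ℕ} (j : Fin (m + 1)) : Fin.clamp j m = j :=
  Fin.ext (min_eq_left (Nat.le_of_lt_succ j.isLt))

lemma Fin.clamp_surjective {m n : ℕ} (h : m + 1 ≤ n) :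
    Function.Surjective fun i : Fin n => Fin.clamp i m :=
  fun j => ⟨Fin.castLE h j, Fin.clamp_val_eq_self j⟩

section MatClip

variable {S : Type*} {m n : ℕ}

def matClip (A : MatSR S (m + 1)) : MatSR S n :=
  fun i j => A (Fin.clamp i m) (Fin.clamp j m)

lemma matClip_injective (h : m + 1 ≤ n) :
    Function.Injective (matClip : MatSR S (m + 1) → MatSR S n) := by
  intro A B hAB
  funext i j
  simpa only [matClip, Fin.val_castLE, Fin.clamp_val_eq_self] using
    congrFun₂ hAB (Fin.castLE h i) (Fin.castLE h j)

lemma matClip_mul [BipotentSemiring S] (h : m + 1 ≤ n) (A B : MatSR S (m + 1)) :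
    matClip (n := n) (A * B) = matClip A * matClip B := by
  funext i j
  have hsum : finSum (fun k => matClip A i k * matClip B k j)
      = finSum fun k => A (Fin.clamp i m) k * B k (Fin.clamp j m) :=
    BipotentSemiring.finSum_eq_of_range_eq <|
      (Fin.clamp_surjective h).range_comp fun k => A (Fin.clamp i m) k * B k (Fin.clamp j m)
  show (finSum _).getD _ = (finSum _).getD _
  rw [hsum]
  rfl

def matClipHom [BipotentSemiring S] (h : m + 1 ≤ n) : MatSR S (m + 1) →ₙ* MatSR S n where
  toFun := matClip
  map_mul' := matClip_mul h

end MatClip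

section UTTrunc

variable {S : Type*} {m n : ℕ}

def utTrunc (h : m ≤ n) (A : UTMat S n) : UTMat S m :=
  ⟨fun i j => A.1 (Fin.castLE h i) (Fin.castLE h j),
    fun _ _ hji => A.2.1 _ _ hji, fun _ _ hij => A.2.2 _ _ hij⟩

lemma utTrunc_mul [Add S] [Mul S] (h : m ≤ n) (A B : UTMat S n) :
    utTrunc h (A * B) = utTrunc h A * utTrunc h B := by
  apply Subtype.ext
  funext i j
  show (finSum _).getD _ = (finSum _).getD _
  rw [finSum_castLE_of_forall_add_eq_self i.pos h]
  · rfl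
  intro k hk b
  rw [B.2.1 k _ (by simp; omega), Adj0.mul_zero, Adj0.add_zero]

lemma utTrunc_surjective [Nonempty S] (h : m ≤ n) :
    Function.Surjective (utTrunc (S := S) h) := by
  intro A
  let s : S := Classical.arbitrary S
  refine ⟨⟨fun i j => if (j : ℕ) < i then .zero else
      if hij : (i : ℕ) < m ∧ (j : ℕ) < m then A.1 ⟨i, hij.1⟩ ⟨j, hij.2⟩ else .elem s,
    fun _ _ hji => if_pos hji, fun i j hij => ?_⟩, ?_⟩
  · dsimp only
    rw [if_neg (not_lt.mpr hij)]
    split_ifs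
    exacts [A.2.2 _ _ hij, ⟨s, rfl⟩]
  · apply Subtype.ext
    funext i j
    simp only [utTrunc, Fin.val_castLE, Fin.is_lt, and_self, dite_true]
    split_ifs with hji
    exacts [(A.2.1 i j hji).symm, rfl]

def utTruncHom [Add S] [Mul S] (h : m ≤ n) : UTMat S n →ₙ* UTMat S m where
  toFun := utTrunc h
  map_mul' := utTrunc_mul h

end UTTrunc

/-- over a commutative bipotent semiring, strong permutability of
`M_n(S)` (resp. `UT_n(S)`) passes down to `M_m(S)` (resp. `UT_m(S)`) for `m < n`. -/
theorem stmt_4 {S : Type*} [CommBipotentSemiring S] (m n : ℕ) (h0 : 0 < m) (hmn : m < n) :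
    (StronglyPermutable (MatSR S n) → StronglyPermutable (MatSR S m)) ∧
    (StronglyPermutable (UTMat S n) → StronglyPermutable (UTMat S m)) := by
  obtain ⟨m, rfl⟩ := Nat.exists_eq_add_one_of_ne_zero h0.ne'
  have := PlainSemiring.nonempty' (S := S)
  exact ⟨.of_injective (matClipHom hmn.le) (matClip_injective hmn.le),
    .of_surjective (utTruncHom hmn.le) (utTrunc_surjective hmn.le)⟩
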